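/- Let U, Ũ ⊆ ℂ be connected open sets, let φ : Ũ → U be a conformal map (holomorphic bijection), let ξ > 0, and let h : U → ℝ be continuous. Define h̃ : Ũ → ℝ by h̃ = h∘φ + (1/ξ) log|φ′|. Then the weighted length metrics satisfy D_h(φ(z), φ(w)) = D_{h̃}(z, w) for all z, w ∈ Ũ, where D_h is defined on U using weight e^{ξ h} and D_{h̃} is defined on Ũ using weight e^{ξ h̃}. -/

import Mathlib

open MeasureTheory

/-- `P : [a,b] → ℂ` is a piecewise continuously differentiable path: it is continuous on
`[a,b]` and there is a partition `a = s 0 ≤ s 1 ≤ ⋯ ≤ s n = b` such that `P` is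
continuously differentiable on each piece `[s i, s (i+1)]`. -/
def IsPiecewiseC1Path (P : ℝ → ℂ) (a b : ℝ) : Prop :=
  ContinuousOn P (Set.Icc a b) ∧
  ∃ (n : ℕ) (s : Fin (n + 1) → ℝ), s 0 = a ∧ s (Fin.last n) = b ∧ Monotone s ∧
    ∀ i : Fin n, ContDiffOn ℝ 1 P (Set.Icc (s i.castSucc) (s i.succ))

/-- The weighted length `∫_a^b e^{ξ h(P(t))} |P′(t)| dt` of a path `P : [a,b] → ℂ`,
with weight exponent `ξ` and field `h`. -/
noncomputable def weightedLength (ξ : ℝ) (h : ℂ → ℝ) (P : ℝ → ℂ) (a b : ℝ) : ℝ :=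
  ∫ t in a..b, Real.exp (ξ * h (P t)) * ‖deriv P t‖

/-- The weighted length metric `D_h(z,w)`: the infimum of the weighted lengths of all
piecewise continuously differentiable paths in `U` from `z` to `w`. -/
noncomputable def weightedDist (ξ : ℝ) (h : ℂ → ℝ) (U : Set ℂ) (z w : ℂ) : ℝ :=
  sInf {L : ℝ | ∃ (a b : ℝ) (P : ℝ → ℂ), a ≤ b ∧ P a = z ∧ P b = w ∧
    (∀ t ∈ Set.Icc a b, P t ∈ U) ∧ IsPiecewiseC1Path P a b ∧ L = weightedLength ξ h P a b}

/-!
A holomorphic bijection `φ` has nowhere vanishing derivative: at a critical point `z₀`,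
`φ - φ z₀` is locally the `n`-th power (`n ≥ 2`) of a local coordinate, so `φ` is not injective
near `z₀`. Hence `φ⁻¹` is holomorphic as well. By the chain rule `|(φ ∘ P)'| = |φ' ∘ P| |P'|`,
and `e^{ξ h̃} = e^{ξ h ∘ φ} |φ'|`, so composing with `φ` preserves weighted lengths. Since `φ`
and `φ⁻¹` both carry admissible paths to admissible paths, the two sets of weighted lengths
whose infima define the metrics coincide.
-/

open Filter Function Set Topology

theorem Complex.not_injOn_pow_of_mem_nhds_zero {n : ℕ} (hn : 2 ≤ n) {s : Set ℂ}
    (hs : s ∈ 𝓝 0) : ¬InjOn (· ^ n) s := by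
  intro hinj
  obtain ⟨ε, hε, hball⟩ := Metric.mem_nhds_iff.mp hs
  have hn0 : n ≠ 0 := by omega
  set ζ := Complex.exp (2 * Real.pi * Complex.I / n)
  have hζ : IsPrimitiveRoot ζ n := Complex.isPrimitiveRoot_exp n hn0
  set w : ℂ := ((ε / 2 : ℝ) : ℂ)
  have hw : ‖w‖ = ε / 2 := by simp [w, abs_of_pos hε]
  have hw0 : w ≠ 0 := norm_ne_zero_iff.mp (by rw [hw]; positivity)
  have hwmem : w ∈ s := hball (by rw [mem_ball_zero_iff, hw]; linarith)
  have hζwmem : ζ * w ∈ s :=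
    hball (by rw [mem_ball_zero_iff, norm_mul, hζ.norm'_eq_one hn0, one_mul, hw]; linarith)
  have hpow : w ^ n = (ζ * w) ^ n := by rw [mul_pow, hζ.pow_eq_one, one_mul]
  exact hζ.ne_one (by omega) (mul_right_cancel₀ hw0 (by rw [one_mul, ← hinj hwmem hζwmem hpow]))

theorem AnalyticAt.exists_pow_eq {u : ℂ → ℂ} {z₀ : ℂ} (hu : AnalyticAt ℂ u z₀)
    (hu₀ : u z₀ ≠ 0) {n : ℕ} (hn : n ≠ 0) :
    ∃ v : ℂ → ℂ, AnalyticAt ℂ v z₀ ∧ v z₀ ≠ 0 ∧ ∀ z, v z ^ n = u z := by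
  -- `u / u z₀` is `1` at `z₀`, where the principal branch of `(·) ^ (1 / n)` is analytic
  refine ⟨fun z => u z₀ ^ (n⁻¹ : ℂ) * (u z / u z₀) ^ (n⁻¹ : ℂ), ?_, ?_, ?_⟩
  · exact analyticAt_const.mul ((hu.div analyticAt_const hu₀).cpow analyticAt_const
      (by simp [hu₀, Complex.one_mem_slitPlane]))
  · simp [hu₀, hn]
  · intro z
    rw [mul_pow, Complex.cpow_nat_inv_pow _ hn, Complex.cpow_nat_inv_pow _ hn]
    field_simp

theorem AnalyticAt.exists_hasStrictDerivAt_eventually_sub_eq_pow {f : ℂ → ℂ} {z₀ : ℂ} {n : ℕ}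
    (hf : AnalyticAt ℂ f z₀) (hn : n ≠ 0) (hord : analyticOrderAt (f · - f z₀) z₀ = n) :
    ∃ (G : ℂ → ℂ) (c : ℂ), c ≠ 0 ∧ HasStrictDerivAt G c z₀ ∧ G z₀ = 0 ∧
      ∀ᶠ z in 𝓝 z₀, f z - f z₀ = G z ^ n := by
  obtain ⟨u, hu, hu₀, hfu⟩ := ((hf.sub analyticAt_const).analyticOrderAt_eq_natCast).mp hord
  obtain ⟨v, hv, hv₀, hvu⟩ := hu.exists_pow_eq hu₀ hn
  refine ⟨fun z => (z - z₀) * v z, v z₀, hv₀, ?_, by simp, ?_⟩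
  · have hlin : HasStrictDerivAt (fun z => z - z₀) 1 z₀ := (hasStrictDerivAt_id z₀).sub_const z₀
    simpa using hlin.fun_mul hv.hasStrictDerivAt
  · filter_upwards [hfu] with z hz
    rw [show f z - f z₀ = _ from hz, mul_pow, hvu, smul_eq_mul]

theorem AnalyticAt.not_injOn_of_deriv_eq_zero {f : ℂ → ℂ} {z₀ : ℂ} (hf : AnalyticAt ℂ f z₀)
    (hf' : deriv f z₀ = 0) {s : Set ℂ} (hs : s ∈ 𝓝 z₀) : ¬InjOn f s := by
  intro hinj
  have hfin : analyticOrderAt (f · - f z₀) z₀ ≠ ⊤ := by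
    intro htop
    rw [analyticOrderAt_eq_top] at htop
    have hpunct : ∀ᶠ z in 𝓝[≠] z₀, (f z - f z₀ = 0 ∧ z ∈ s) ∧ z ≠ z₀ :=
      ((htop.and hs).filter_mono nhdsWithin_le_nhds).and self_mem_nhdsWithin
    obtain ⟨z, ⟨hfz, hzs⟩, hz⟩ := hpunct.exists
    exact hz (hinj hzs (mem_of_mem_nhds hs) (sub_eq_zero.mp hfz))
  obtain ⟨n, hn⟩ := ENat.ne_top_iff_exists.mp hfin
  have hn2 : 2 ≤ n := by
    have hsum := hf.analyticOrderAt_deriv_add_one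
    have hpos := analyticOrderAt_ne_zero.mpr ⟨hf.deriv, hf'⟩
    rw [← hn] at hsum
    have hfin' : analyticOrderAt (deriv f) z₀ ≠ ⊤ := fun htop => by simp [htop] at hsum
    obtain ⟨m, hm⟩ := ENat.ne_top_iff_exists.mp hfin'
    rw [← hm] at hsum hpos
    norm_cast at hsum hpos
    omega
  obtain ⟨G, c, hc, hG, hG₀, hfG⟩ :=
    hf.exists_hasStrictDerivAt_eventually_sub_eq_pow (by omega) hn.symm
  have hE : s ∩ {z | f z - f z₀ = G z ^ n} ∈ 𝓝 z₀ := inter_mem hs hfG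
  have hGE : G '' (s ∩ {z | f z - f z₀ = G z ^ n}) ∈ 𝓝 0 := by
    rw [← hG₀, ← hG.map_nhds_eq hc]
    exact image_mem_map hE
  refine Complex.not_injOn_pow_of_mem_nhds_zero hn2 hGE ?_
  rintro _ ⟨a, ⟨has, hfa⟩, rfl⟩ _ ⟨b, ⟨hbs, hfb⟩, rfl⟩ hab
  simp only [mem_ofPred_eq] at hfa hfb hab
  exact congrArg G (hinj has hbs (by linear_combination hfa - hfb + hab))

theorem DifferentiableOn.deriv_ne_zero_of_injOn {V : Set ℂ} (hV : IsOpen V) {f : ℂ → ℂ}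
    (hf : DifferentiableOn ℂ f V) (hinj : InjOn f V) {z : ℂ} (hz : z ∈ V) :
    _root_.deriv f z ≠ 0 :=
  fun h => (hf.analyticAt (hV.mem_nhds hz)).not_injOn_of_deriv_eq_zero h (hV.mem_nhds hz) hinj

theorem Set.BijOn.hasStrictDerivAt_invFunOn {U V : Set ℂ} (hV : IsOpen V) {f : ℂ → ℂ}
    (hf : DifferentiableOn ℂ f V) (hbij : BijOn f V U) {y : ℂ} (hy : y ∈ U) :
    HasStrictDerivAt (invFunOn f V) (deriv f (invFunOn f V y))⁻¹ y := by
  have hx : invFunOn f V y ∈ V := hbij.surjOn.mapsTo_invFunOn hy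
  have hleft : ∀ᶠ z in 𝓝 (invFunOn f V y), invFunOn f V (f z) = z :=
    eventually_of_mem (hV.mem_nhds hx) fun z hz => hbij.invOn_invFunOn.1 hz
  have hstrict := (hf.analyticAt (hV.mem_nhds hx)).hasStrictDerivAt.to_local_left_inverse
    (hf.deriv_ne_zero_of_injOn hV hbij.injOn hx) hleft
  rwa [hbij.invOn_invFunOn.2 hy] at hstrict

theorem IsPiecewiseC1Path.comp {W : Set ℂ} {f : ℂ → ℂ} (hf : ContDiffOn ℝ 1 f W) {P : ℝ → ℂ}
    {a b : ℝ} (hP : IsPiecewiseC1Path P a b) (hPW : MapsTo P (Icc a b) W) :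
    IsPiecewiseC1Path (f ∘ P) a b := by
  obtain ⟨hPc, n, s, rfl, rfl, hs, hPs⟩ := hP
  refine ⟨hf.continuousOn.comp hPc hPW, n, s, rfl, rfl, hs, fun i => ?_⟩
  exact hf.comp (hPs i) (hPW.mono_left (Icc_subset_Icc (hs (Fin.zero_le _)) (hs (Fin.le_last _))))

theorem HasStrictDerivAt.deriv_comp_of_continuousAt {𝕜 𝕜' : Type*} [NontriviallyNormedField 𝕜]
    [NontriviallyNormedField 𝕜'] [CompleteSpace 𝕜'] [NormedAlgebra 𝕜 𝕜'] {f : 𝕜' → 𝕜'}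
    {f' : 𝕜'} {P : 𝕜 → 𝕜'} {t : 𝕜} (hf : HasStrictDerivAt f f' (P t)) (hf' : f' ≠ 0)
    (hP : ContinuousAt P t) : deriv (f ∘ P) t = f' * deriv P t := by
  by_cases hPd : DifferentiableAt 𝕜 P t
  · exact (hf.hasDerivAt.comp t hPd.hasDerivAt).deriv
  -- then both derivatives are junk `0`: near `t`, `P` is `f ∘ P` followed by a local inverse of `f`
  have hfPd : ¬DifferentiableAt 𝕜 (f ∘ P) t := by
    intro hd
    have hrecover : (hf.localInverse f f' (P t) hf') ∘ (f ∘ P) =ᶠ[𝓝 t] P :=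
      hP.eventually (hf.eventually_left_inverse hf')
    exact hPd (hrecover.differentiableAt_iff.mp
      ((hf.to_localInverse hf').hasDerivAt.comp t hd.hasDerivAt).differentiableAt)
  rw [deriv_zero_of_not_differentiableAt hfPd, deriv_zero_of_not_differentiableAt hPd, mul_zero]

theorem weightedLength_comp {W : Set ℂ} (hW : IsOpen W) {f : ℂ → ℂ}
    (hf : DifferentiableOn ℂ f W) (hf' : ∀ x ∈ W, deriv f x ≠ 0) {ξ : ℝ} {g₁ g₂ : ℂ → ℝ}
    (hg : ∀ x ∈ W, Real.exp (ξ * g₁ (f x)) * ‖deriv f x‖ = Real.exp (ξ * g₂ x))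
    {P : ℝ → ℂ} {a b : ℝ} (hab : a ≤ b) (hPc : ContinuousOn P (Icc a b))
    (hPW : MapsTo P (Icc a b) W) :
    weightedLength ξ g₁ (f ∘ P) a b = weightedLength ξ g₂ P a b := by
  simp only [weightedLength, intervalIntegral.integral_of_le hab, integral_Ioc_eq_integral_Ioo]
  refine setIntegral_congr_fun measurableSet_Ioo fun t ht => ?_
  have hPt : P t ∈ W := hPW (Ioo_subset_Icc_self ht)
  have hPcont : ContinuousAt P t := hPc.continuousAt (Icc_mem_nhds ht.1 ht.2)
  rw [Function.comp_apply, (hf.analyticAt (hW.mem_nhds hPt)).hasStrictDerivAt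
    |>.deriv_comp_of_continuousAt (hf' _ hPt) hPcont, norm_mul, ← mul_assoc, hg _ hPt]

def weightedLengths (ξ : ℝ) (h : ℂ → ℝ) (U : Set ℂ) (z w : ℂ) : Set ℝ :=
  {L : ℝ | ∃ (a b : ℝ) (P : ℝ → ℂ), a ≤ b ∧ P a = z ∧ P b = w ∧
    (∀ t ∈ Set.Icc a b, P t ∈ U) ∧ IsPiecewiseC1Path P a b ∧ L = weightedLength ξ h P a b}

theorem weightedDist_eq_sInf_weightedLengths (ξ : ℝ) (h : ℂ → ℝ) (U : Set ℂ) (z w : ℂ) :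
    weightedDist ξ h U z w = sInf (weightedLengths ξ h U z w) :=
  rfl

theorem weightedLengths_subset_comp {V U : Set ℂ} (hV : IsOpen V) {f : ℂ → ℂ}
    (hf : DifferentiableOn ℂ f V) (hf' : ∀ x ∈ V, deriv f x ≠ 0) (hfV : MapsTo f V U)
    {ξ : ℝ} {g₁ g₂ : ℂ → ℝ}
    (hg : ∀ x ∈ V, Real.exp (ξ * g₁ (f x)) * ‖deriv f x‖ = Real.exp (ξ * g₂ x)) (z w : ℂ) :
    weightedLengths ξ g₂ V z w ⊆ weightedLengths ξ g₁ U (f z) (f w) := by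
  rintro _ ⟨a, b, P, hab, rfl, rfl, hPV, hP, rfl⟩
  exact ⟨a, b, f ∘ P, hab, rfl, rfl, hfV.comp hPV,
    hP.comp ((hf.contDiffOn hV).restrict_scalars ℝ) hPV,
    (weightedLength_comp hV hf hf' hg hab hP.1 hPV).symm⟩

theorem weightedDist_comp_of_bijOn {U V : Set ℂ} (hU : IsOpen U) (hV : IsOpen V) {f : ℂ → ℂ}
    (hf : DifferentiableOn ℂ f V) (hbij : BijOn f V U) {ξ : ℝ} {g₁ g₂ : ℂ → ℝ}
    (hg : ∀ x ∈ V, Real.exp (ξ * g₁ (f x)) * ‖deriv f x‖ = Real.exp (ξ * g₂ x))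
    {z w : ℂ} (hz : z ∈ V) (hw : w ∈ V) :
    weightedDist ξ g₁ U (f z) (f w) = weightedDist ξ g₂ V z w := by
  set ψ := invFunOn f V
  have hf' : ∀ x ∈ V, deriv f x ≠ 0 := fun x hx => hf.deriv_ne_zero_of_injOn hV hbij.injOn hx
  have hψU : MapsTo ψ U V := hbij.surjOn.mapsTo_invFunOn
  have hinv : InvOn ψ f V U := hbij.invOn_invFunOn
  have hψ : ∀ y ∈ U, HasStrictDerivAt ψ (deriv f (ψ y))⁻¹ y :=
    fun y hy => hbij.hasStrictDerivAt_invFunOn hV hf hy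
  have hψ' : ∀ y ∈ U, deriv ψ y = (deriv f (ψ y))⁻¹ := fun y hy => (hψ y hy).hasDerivAt.deriv
  have hgψ : ∀ y ∈ U, Real.exp (ξ * g₂ (ψ y)) * ‖deriv ψ y‖ = Real.exp (ξ * g₁ y) := by
    intro y hy
    rw [← hg _ (hψU hy), hinv.2 hy, hψ' y hy, norm_inv, mul_assoc,
      mul_inv_cancel₀ (norm_ne_zero_iff.mpr (hf' _ (hψU hy))), mul_one]
  have hsubset := weightedLengths_subset_comp hU
    (fun y hy => (hψ y hy).hasDerivAt.differentiableAt.differentiableWithinAt)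
    (fun y hy => by simpa [hψ' y hy] using hf' _ (hψU hy)) hψU hgψ (f z) (f w)
  rw [hinv.1 hz, hinv.1 hw] at hsubset
  rw [weightedDist_eq_sInf_weightedLengths, weightedDist_eq_sInf_weightedLengths,
    hsubset.antisymm (weightedLengths_subset_comp hV hf hf' hbij.mapsTo hg z w)]

theorem lqg_metric_coordinate_change_general
    {U V : Set ℂ} (hU : IsOpen U) (hV : IsOpen V)
    {φ : ℂ → ℂ} (hφ : DifferentiableOn ℂ φ V) (hφbij : Set.BijOn φ V U)
    {ξ : ℝ} (hξ : 0 < ξ) {h : ℂ → ℝ} :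
    ∀ z ∈ V, ∀ w ∈ V,
      weightedDist ξ h U (φ z) (φ w)
        = weightedDist ξ (fun x => h (φ x) + (1 / ξ) * Real.log ‖deriv φ x‖) V z w := by
  intro z hz w hw
  refine weightedDist_comp_of_bijOn hU hV hφ hφbij (fun x hx => ?_) hz hw
  have hφ' : 0 < ‖deriv φ x‖ := norm_pos_iff.mpr (hφ.deriv_ne_zero_of_injOn hV hφbij.injOn hx)
  rw [mul_add, Real.exp_add, ← mul_assoc, mul_one_div_cancel hξ.ne', one_mul, Real.exp_log hφ']

/-- Coordinate change for the weighted length metric: if `φ : Ũ → U` is a holomorphic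
bijection between connected open subsets of `ℂ`, `ξ > 0`, `h : U → ℝ` is continuous and
`h̃ = h ∘ φ + (1/ξ) log |φ′|`, then `D_h(φ(z), φ(w)) = D_h̃(z, w)` for all `z, w ∈ Ũ`. -/
theorem lqg_metric_coordinate_change
    {U V : Set ℂ} (hU : IsOpen U) (hUconn : IsConnected U)
    (hV : IsOpen V) (hVconn : IsConnected V)
    {φ : ℂ → ℂ} (hφ : DifferentiableOn ℂ φ V) (hφbij : Set.BijOn φ V U)
    {ξ : ℝ} (hξ : 0 < ξ) {h : ℂ → ℝ} (hh : ContinuousOn h U) :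
    ∀ z ∈ V, ∀ w ∈ V,
      weightedDist ξ h U (φ z) (φ w)
        = weightedDist ξ (fun x => h (φ x) + (1 / ξ) * Real.log ‖deriv φ x‖) V z w :=
  lqg_metric_coordinate_change_general hU hV hφ hφbij hξ
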